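/- arXiv:2410.07960 — 3 statements merged into one kernel-verified Lean document; each statement's English description precedes it below -/
import Mathlib

section
/- The divided difference operators satisfy the type A braid relation: ∂_i ∘ ∂_{i+1} ∘ ∂_i = ∂_{i+1} ∘ ∂_i ∘ ∂_{i+1} as operators on ℂ[x_1,...,x_n], for 1 ≤ i ≤ n-2. -/
open MvPolynomial

/-!
Multiplying `∂_{ab} ∂_{bc} ∂_{ab} f` by the Vandermonde product
`(x_b - x_a)(x_c - x_b)(x_c - x_a)` gives, after peeling off one operator at a time and using
that `∂_{ab} f` is `s_{ab}`-invariant, the alternating sum of `w f` over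
`w ∈ ⟨s_{ab}, s_{bc}⟩ ≅ S₃`. The same holds for `∂_{bc} ∂_{ab} ∂_{bc} f` because
`s_{ab} s_{bc} s_{ab} = s_{bc} s_{ab} s_{bc}`, and the Vandermonde product can be cancelled
since the polynomial ring over a domain is a domain.
-/

theorem Equiv.swap_braid {α : Type*} [DecidableEq α] {a b c : α}
    (hab : a ≠ b) (hac : a ≠ c) (hbc : b ≠ c) :
    swap a b * swap b c * swap a b = swap b c * swap a b * swap b c := by
  rw [swap_mul_swap_mul_swap hab hac, swap_comm a b, swap_comm b c,
    swap_mul_swap_mul_swap hbc.symm hac.symm, swap_comm]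

namespace MvPolynomial

variable {σ R : Type*} [CommRing R]

theorem X_sub_X_ne_zero [Nontrivial R] {a b : σ} (hab : a ≠ b) :
    (X b - X a : MvPolynomial σ R) ≠ 0 :=
  sub_ne_zero.mpr fun h => hab (X_injective h).symm

variable [DecidableEq σ]

theorem rename_swap_rename_swap (a b : σ) (f : MvPolynomial σ R) :
    rename (Equiv.swap a b) (rename (Equiv.swap a b) f) = f := by
  rw [rename_rename, ← Equiv.Perm.coe_mul, Equiv.swap_mul_self, Equiv.Perm.coe_one,
    rename_id_apply]

theorem rename_swap_braid {a b c : σ} (hab : a ≠ b) (hac : a ≠ c) (hbc : b ≠ c)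
    (f : MvPolynomial σ R) :
    rename (Equiv.swap a b) (rename (Equiv.swap b c) (rename (Equiv.swap a b) f)) =
      rename (Equiv.swap b c) (rename (Equiv.swap a b) (rename (Equiv.swap b c) f)) := by
  simp only [rename_rename, ← Equiv.Perm.coe_mul, ← mul_assoc, Equiv.swap_braid hab hac hbc]

def IsDividedDifference (a b : σ) (D : MvPolynomial σ R → MvPolynomial σ R) : Prop :=
  ∀ f, (X b - X a) * D f = rename (Equiv.swap a b) f - f

namespace IsDividedDifference

variable {a b c : σ} {D E : MvPolynomial σ R → MvPolynomial σ R}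

theorem symm_neg (hD : IsDividedDifference a b D) : IsDividedDifference b a (fun f => -D f) := by
  intro f
  rw [Equiv.swap_comm, ← hD f]
  ring

theorem symm_apply_neg (hD : IsDividedDifference a b D) :
    IsDividedDifference b a (fun f => D (-f)) := by
  intro f
  rw [Equiv.swap_comm]
  linear_combination (-1 : MvPolynomial σ R) * hD (-f) - map_neg (rename (Equiv.swap a b)) f

theorem rename_swap_apply [IsDomain R] (hab : a ≠ b) (hD : IsDividedDifference a b D)
    (f : MvPolynomial σ R) : rename (Equiv.swap a b) (D f) = D f := by
  have key := congrArg (rename (Equiv.swap a b)) (hD f)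
  simp only [map_mul, map_sub, rename_X, Equiv.swap_apply_left, Equiv.swap_apply_right,
    rename_swap_rename_swap] at key
  refine mul_left_cancel₀ (X_sub_X_ne_zero (R := R) hab) ?_
  linear_combination -key - hD f

theorem vandermonde_mul_comp_comp [IsDomain R] (hab : a ≠ b) (hac : a ≠ c) (hbc : b ≠ c)
    (hD : IsDividedDifference a b D) (hE : IsDividedDifference b c E) (f : MvPolynomial σ R) :
    (X b - X a) * (X c - X b) * (X c - X a) * D (E (D f)) =
      rename (Equiv.swap a b) (rename (Equiv.swap b c) (rename (Equiv.swap a b) f))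
        - rename (Equiv.swap a b) (rename (Equiv.swap b c) f)
        - rename (Equiv.swap b c) (rename (Equiv.swap a b) f)
        + rename (Equiv.swap b c) f + rename (Equiv.swap a b) f - f := by
  have hsED := congrArg (rename (Equiv.swap a b)) (hE (D f))
  have htD := congrArg (rename (Equiv.swap b c)) (hD f)
  have hstD := congrArg (rename (Equiv.swap a b)) htD
  simp only [map_mul, map_sub, rename_X, Equiv.swap_apply_left, Equiv.swap_apply_right,
    Equiv.swap_apply_of_ne_of_ne hab hac, Equiv.swap_apply_of_ne_of_ne hac.symm hbc.symm]
    at hsED htD hstD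
  linear_combination (X c - X b) * (X c - X a) * hD (E (D f)) + (X c - X b) * hsED
    - (X c - X a) * hE (D f) + hstD - htD + hD f + (X b - X c) * hD.rename_swap_apply hab f

theorem braid [IsDomain R] (hab : a ≠ b) (hac : a ≠ c) (hbc : b ≠ c)
    (hD : IsDividedDifference a b D) (hE : IsDividedDifference b c E) (f : MvPolynomial σ R) :
    D (E (D f)) = E (D (E f)) := by
  have left := vandermonde_mul_comp_comp hab hac hbc hD hE f
  -- `E ∘ D ∘ E` is the left-hand pattern for the triple `(c, b, a)`, with
  -- `∂_{cb} = -∂_{bc}` and `∂_{ba} = ∂_{ab} ∘ neg`.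
  have right :=
    vandermonde_mul_comp_comp hbc.symm hac.symm hab.symm hE.symm_neg hD.symm_apply_neg f
  simp only [neg_neg, Equiv.swap_comm c b, Equiv.swap_comm b a] at right
  have hvdm : (X b - X a) * (X c - X b) * (X c - X a) ≠ (0 : MvPolynomial σ R) :=
    mul_ne_zero (mul_ne_zero (X_sub_X_ne_zero hab) (X_sub_X_ne_zero hbc)) (X_sub_X_ne_zero hac)
  refine mul_left_cancel₀ hvdm ?_
  linear_combination left - right + rename_swap_braid hab hac hbc f

end IsDividedDifference
end MvPolynomial

/-- The divided difference operators satisfy the type A braid relation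
`∂_i ∘ ∂_{i+1} ∘ ∂_i = ∂_{i+1} ∘ ∂_i ∘ ∂_{i+1}` on `ℂ[x_1,...,x_n]`.
Here `∂_i` (resp. `∂_{i+1}`) is characterized by
`(x_{i+1} - x_i) * ∂_i f = s_i f - f` (resp. with indices shifted by one). -/
theorem divided_difference_braid (n : ℕ) (i j k : Fin n)
    (hij : (i : ℕ) + 1 = (j : ℕ)) (hjk : (j : ℕ) + 1 = (k : ℕ))
    (Di Dj : MvPolynomial (Fin n) ℂ → MvPolynomial (Fin n) ℂ)
    (hDi : ∀ f, (X j - X i) * Di f = rename (Equiv.swap i j) f - f)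
    (hDj : ∀ f, (X k - X j) * Dj f = rename (Equiv.swap j k) f - f) :
    ∀ f, Di (Dj (Di f)) = Dj (Di (Dj f)) :=
  IsDividedDifference.braid (Fin.ne_of_val_ne (by omega)) (Fin.ne_of_val_ne (by omega))
    (Fin.ne_of_val_ne (by omega)) hDi hDj
end

section
/- For parameters β, α, γ, the operator T_i = -β + ((α+β+γ)x_i + γ x_{i+1} + 1 + (β+γ)(α+γ) x_i x_{i+1})∂_i on ℂ[x_1,...,x_n] satisfies the quadratic Hecke relation T_i² = (α - β)·T_i + αβ·id. -/
/-!
The symmetrisation `s_i` is an involution sending `x_{i+1} - x_i` to its negative, so `∂_i f` is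
`s_i`-invariant. The coefficient `q` of `∂_i` in `T_i = -β + q ∂_i` satisfies
`s_i q - q = (α + β)(x_{i+1} - x_i)`, which gives `∂_i (T_i f) = α ∂_i f`; substituting
`q ∂_i f = T_i f + β f` into `T_i (T_i f) = -β T_i f + α q ∂_i f` yields the relation.
-/

open MvPolynomial

def IsDividedDifference {R : Type*} [CommRing R] (σ : R →+* R) (d : R) (D : R → R) : Prop :=
  ∀ f, d * D f = σ f - f

namespace IsDividedDifference

variable {R : Type*} [CommRing R] [IsDomain R] {σ : R →+* R} {d : R} {D : R → R}

theorem map_apply (hD : IsDividedDifference σ d D) (hσ : Function.Involutive σ)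
    (hd : σ d = -d) (hd0 : d ≠ 0) (f : R) : σ (D f) = D f := by
  apply mul_left_cancel₀ hd0
  have h := congrArg σ (hD f)
  rw [map_mul, map_sub, hσ, hd] at h
  rw [hD f]
  linear_combination -h

theorem apply_mul_add_mul (hD : IsDividedDifference σ d D) (hσ : Function.Involutive σ)
    (hd : σ d = -d) (hd0 : d ≠ 0) {b q : R} (c : R) (hb : σ b = b) (hq : σ q = q + c * d)
    (f : R) : D (b * f + q * D f) = (b + c) * D f := by
  apply mul_left_cancel₀ hd0
  rw [hD, map_add, map_mul, map_mul, hb, hq, hD.map_apply hσ hd hd0]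
  linear_combination -b * hD f

theorem quadratic_relation (hD : IsDividedDifference σ d D) (hσ : Function.Involutive σ)
    (hd : σ d = -d) (hd0 : d ≠ 0) {b q : R} (c : R) (hb : σ b = b) (hq : σ q = q + c * d)
    {T : R → R} (hT : ∀ f, T f = b * f + q * D f) (f : R) :
    T (T f) = (2 * b + c) * T f - b * (b + c) * f := by
  rw [hT (T f), hT f, hD.apply_mul_add_mul hσ hd hd0 c hb hq]
  ring

end IsDividedDifference

theorem MvPolynomial.rename_swap_involutive {σ R : Type*} [DecidableEq σ] [CommSemiring R]
    (i j : σ) : Function.Involutive (rename (R := R) (Equiv.swap i j)) := fun p => by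
  rw [rename_rename, Function.Involutive.comp_self (Equiv.swap_apply_self i j),
    rename_id_apply]

/-- The operator `T_i = -β + ((α+β+γ)x_i + γ x_{i+1} + 1 + (β+γ)(α+γ) x_i x_{i+1})∂_i`
satisfies the quadratic Hecke relation `T_i² = (α-β)·T_i + αβ·id`. -/
theorem hecke_quadratic_relation (n : ℕ) (i j : Fin n) (hij : (i : ℕ) + 1 = (j : ℕ))
    (α β γ : ℂ)
    (D T : MvPolynomial (Fin n) ℂ → MvPolynomial (Fin n) ℂ)
    (hD : ∀ f, (X j - X i) * D f = rename (Equiv.swap i j) f - f)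
    (hT : ∀ f, T f = C (-β) * f +
      (C (α + β + γ) * X i + C γ * X j + 1 + C ((β + γ) * (α + γ)) * (X i * X j)) * D f) :
    ∀ f, T (T f) = C (α - β) * T f + C (α * β) * f := by
  intro f
  set σ := (rename (R := ℂ) (Equiv.swap i j)).toRingHom
  have hD' : IsDividedDifference σ (X j - X i) D := hD
  have hσ : Function.Involutive σ := rename_swap_involutive i j
  have hne : i ≠ j := fun h => by subst h; omega
  have hd0 : (X j - X i : MvPolynomial (Fin n) ℂ) ≠ 0 :=
    sub_ne_zero.2 fun h => hne (X_injective h).symm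
  have hd : σ (X j - X i) = -(X j - X i) := by simp [σ]
  have hb : σ (C (-β)) = C (-β) := rename_C _ _
  have hq : σ (C (α + β + γ) * X i + C γ * X j + 1 + C ((β + γ) * (α + γ)) * (X i * X j)) =
      C (α + β + γ) * X i + C γ * X j + 1 + C ((β + γ) * (α + γ)) * (X i * X j) +
        C (α + β) * (X j - X i) := by
    simp only [σ, AlgHom.toRingHom_eq_coe, RingHom.coe_coe, map_add, map_mul, map_one,
      rename_C, rename_X, Equiv.swap_apply_left, Equiv.swap_apply_right]
    ring
  rw [hD'.quadratic_relation hσ hd hd0 _ hb hq hT f]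
  simp only [map_add, map_mul, map_sub, map_neg]
  ring
end

section
/- For one color (n=1), the 4×4 matrix R(x_i, x_j) on ℂ²⊗ℂ², with basis labels {+, c}, with entries R^{(c,c)}_{(c,c)} = (α+β+γ)x_j + γx_i + 1 + (β+γ)(α+γ)x_i x_j, R^{(+,+)}_{(+,+)} = (α+β+γ)x_i + γx_j + 1 + (β+γ)(α+γ)x_i x_j, R^{(+,c)}_{(+,c)} = x_j - x_i, R^{(c,+)}_{(c,+)} = αβ(x_j - x_i), R^{(c,+)}_{(+,c)} = (1+(β+γ)x_i)(1+(α+γ)x_i), R^{(+,c)}_{(c,+)} = (1+(β+γ)x_j)(1+(α+γ)x_j), and all other entries zero, satisfies the parametrized Yang–Baxter equation R_{12}(x_1,x_2) R_{13}(x_1,x_3) R_{23}(x_2,x_3) = R_{23}(x_2,x_3) R_{13}(x_1,x_3) R_{12}(x_1,x_2) on (ℂ²)^{⊗3}. -/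
open Matrix

/-- Action of a matrix on `V⊗V` on factors 1 and 2 of `V⊗V⊗V`, `V = ℂ²`. -/
def lift12 {R : Type*} [CommRing R] (M : Matrix (Fin 2 × Fin 2) (Fin 2 × Fin 2) R) :
    Matrix (Fin 2 × Fin 2 × Fin 2) (Fin 2 × Fin 2 × Fin 2) R :=
  Matrix.of fun p q => M (p.1, p.2.1) (q.1, q.2.1) * (if p.2.2 = q.2.2 then 1 else 0)

/-- Action of a matrix on `V⊗V` on factors 1 and 3 of `V⊗V⊗V`. -/
def lift13 {R : Type*} [CommRing R] (M : Matrix (Fin 2 × Fin 2) (Fin 2 × Fin 2) R) :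
    Matrix (Fin 2 × Fin 2 × Fin 2) (Fin 2 × Fin 2 × Fin 2) R :=
  Matrix.of fun p q => M (p.1, p.2.2) (q.1, q.2.2) * (if p.2.1 = q.2.1 then 1 else 0)

/-- Action of a matrix on `V⊗V` on factors 2 and 3 of `V⊗V⊗V`. -/
def lift23 {R : Type*} [CommRing R] (M : Matrix (Fin 2 × Fin 2) (Fin 2 × Fin 2) R) :
    Matrix (Fin 2 × Fin 2 × Fin 2) (Fin 2 × Fin 2 × Fin 2) R :=
  Matrix.of fun p q => (if p.1 = q.1 then 1 else 0) * M p.2 q.2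

/-- The one-color `R`-matrix of Figure 7 on `ℂ²⊗ℂ²` with basis labels `0 = +`, `1 = c`:
entry `R (out₁,out₂) (in₁,in₂)` is the coefficient of `v_{out}` in `R(v_{in})`. -/
def Rfull {R : Type*} [CommRing R] (α β γ x y : R) :
    Matrix (Fin 2 × Fin 2) (Fin 2 × Fin 2) R :=
  Matrix.of fun p q =>
    if p = (1, 1) ∧ q = (1, 1) then
      (α + β + γ) * y + γ * x + 1 + (β + γ) * (α + γ) * x * y
    else if p = (0, 0) ∧ q = (0, 0) then
      (α + β + γ) * x + γ * y + 1 + (β + γ) * (α + γ) * x * y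
    else if p = (0, 1) ∧ q = (0, 1) then y - x
    else if p = (1, 0) ∧ q = (1, 0) then α * β * (y - x)
    else if p = (1, 0) ∧ q = (0, 1) then (1 + (β + γ) * x) * (1 + (α + γ) * x)
    else if p = (0, 1) ∧ q = (1, 0) then (1 + (β + γ) * y) * (1 + (α + γ) * y)
    else 0

lemma Re0000 {R : Type*} [CommRing R] (α β γ x y : R) :
    Rfull α β γ x y (0,0) (0,0) = (α + β + γ) * x + γ * y + 1 + (β + γ) * (α + γ) * x * y := by
  norm_num [Rfull, Prod.ext_iff]

lemma Re0001 {R : Type*} [CommRing R] (α β γ x y : R) :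
    Rfull α β γ x y (0,0) (0,1) = 0 := by
  norm_num [Rfull, Prod.ext_iff]

lemma Re0010 {R : Type*} [CommRing R] (α β γ x y : R) :
    Rfull α β γ x y (0,0) (1,0) = 0 := by
  norm_num [Rfull, Prod.ext_iff]

lemma Re0011 {R : Type*} [CommRing R] (α β γ x y : R) :
    Rfull α β γ x y (0,0) (1,1) = 0 := by
  norm_num [Rfull, Prod.ext_iff]

lemma Re0100 {R : Type*} [CommRing R] (α β γ x y : R) :
    Rfull α β γ x y (0,1) (0,0) = 0 := by
  norm_num [Rfull, Prod.ext_iff]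

lemma Re0101 {R : Type*} [CommRing R] (α β γ x y : R) :
    Rfull α β γ x y (0,1) (0,1) = y - x := by
  norm_num [Rfull, Prod.ext_iff]

lemma Re0110 {R : Type*} [CommRing R] (α β γ x y : R) :
    Rfull α β γ x y (0,1) (1,0) = (1 + (β + γ) * y) * (1 + (α + γ) * y) := by
  norm_num [Rfull, Prod.ext_iff]

lemma Re0111 {R : Type*} [CommRing R] (α β γ x y : R) :
    Rfull α β γ x y (0,1) (1,1) = 0 := by
  norm_num [Rfull, Prod.ext_iff]

lemma Re1000 {R : Type*} [CommRing R] (α β γ x y : R) :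
    Rfull α β γ x y (1,0) (0,0) = 0 := by
  norm_num [Rfull, Prod.ext_iff]

lemma Re1001 {R : Type*} [CommRing R] (α β γ x y : R) :
    Rfull α β γ x y (1,0) (0,1) = (1 + (β + γ) * x) * (1 + (α + γ) * x) := by
  norm_num [Rfull, Prod.ext_iff]

lemma Re1010 {R : Type*} [CommRing R] (α β γ x y : R) :
    Rfull α β γ x y (1,0) (1,0) = α * β * (y - x) := by
  norm_num [Rfull, Prod.ext_iff]

lemma Re1011 {R : Type*} [CommRing R] (α β γ x y : R) :
    Rfull α β γ x y (1,0) (1,1) = 0 := by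
  norm_num [Rfull, Prod.ext_iff]

lemma Re1100 {R : Type*} [CommRing R] (α β γ x y : R) :
    Rfull α β γ x y (1,1) (0,0) = 0 := by
  norm_num [Rfull, Prod.ext_iff]

lemma Re1101 {R : Type*} [CommRing R] (α β γ x y : R) :
    Rfull α β γ x y (1,1) (0,1) = 0 := by
  norm_num [Rfull, Prod.ext_iff]

lemma Re1110 {R : Type*} [CommRing R] (α β γ x y : R) :
    Rfull α β γ x y (1,1) (1,0) = 0 := by
  norm_num [Rfull, Prod.ext_iff]

lemma Re1111 {R : Type*} [CommRing R] (α β γ x y : R) :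
    Rfull α β γ x y (1,1) (1,1) = (α + β + γ) * y + γ * x + 1 + (β + γ) * (α + γ) * x * y := by
  norm_num [Rfull, Prod.ext_iff]

set_option maxHeartbeats 40000000 in
/-- The one-color `R`-matrix satisfies the parametrized Yang–Baxter equation
`R₁₂(x₁,x₂)R₁₃(x₁,x₃)R₂₃(x₂,x₃) = R₂₃(x₂,x₃)R₁₃(x₁,x₃)R₁₂(x₁,x₂)` on `(ℂ²)^⊗3`. -/
theorem Rfull_yang_baxter (α β γ x₁ x₂ x₃ : ℂ) :
    lift12 (Rfull α β γ x₁ x₂) * lift13 (Rfull α β γ x₁ x₃) * lift23 (Rfull α β γ x₂ x₃)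
      = lift23 (Rfull α β γ x₂ x₃) * lift13 (Rfull α β γ x₁ x₃) *
        lift12 (Rfull α β γ x₁ x₂) := by
  ext ⟨a, b, c⟩ ⟨d, e, f⟩
  fin_cases a <;> fin_cases b <;> fin_cases c <;> fin_cases d <;> fin_cases e <;> fin_cases f <;>
    (simp only [Matrix.mul_apply, Fintype.sum_prod_type, Fin.sum_univ_two, lift12, lift13,
      lift23, Matrix.of_apply, Fin.mk_zero, Fin.mk_one, Re0000, Re0001, Re0010, Re0011, Re0100, Re0101, Re0110, Re0111, Re1000, Re1001, Re1010, Re1011, Re1100, Re1101, Re1110, Re1111]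
     norm_num
     try ring)
end
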